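/- arXiv:1903.11655 — 2 statements merged into one kernel-verified Lean document; each statement's English description precedes it below -/
import Mathlib

section
/- Let M be a topological manifold modeled on a topological left module X over a topological ring F, possessing an atlas all of whose charts are homeomorphic to X. Then the diagonal map Δ: M → M×M together with the first projection π₁: M×M → M forms a microbundle with base M, total space M×M, injection Δ, and projection π₁; i.e., π₁ ∘ Δ = id, and for each m ∈ M there exist a neighborhood U of m and a homeomorphism g: U×U → U×X such that π₁ ∘ g = π₁ on U×U, g ∘ Δ|_U = (x ↦ (x,0)), and the required compatibility π₁ ∘ ι₀ = π₁ ∘ Δ holds on U. -/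
namespace Homeomorph

variable {U X : Type*} [TopologicalSpace U] [TopologicalSpace X] [AddCommGroup X]
  [IsTopologicalAddGroup X]

@[simps]
def chartDifference (f : U ≃ₜ X) : (U × U) ≃ₜ (U × X) where
  toFun p := (p.1, f p.2 - f p.1)
  invFun p := (p.1, f.symm (p.2 + f p.1))
  left_inv p := by simp
  right_inv p := by simp
  continuous_toFun := by fun_prop
  continuous_invFun := by fun_prop

theorem chartDifference_diag (f : U ≃ₜ X) (x : U) : chartDifference f (x, x) = (x, 0) := by
  simp

end Homeomorph

theorem stmt0_general (M X : Type*)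
    [TopologicalSpace M] [AddCommGroup X] [TopologicalSpace X]
    [IsTopologicalAddGroup X]
    (hatlas : ∀ m : M, ∃ U : Set M, IsOpen U ∧ m ∈ U ∧ Nonempty (U ≃ₜ X)) :
    ((fun m : M => ((m, m) : M × M).1) = id) ∧
    ∀ m : M, ∃ U : Set M, IsOpen U ∧ m ∈ U ∧
      ∃ g : (U × U) ≃ₜ (U × X),
        (∀ x y : U, (g (x, y)).1 = x) ∧
        (∀ x : U, g (x, x) = (x, (0 : X))) ∧
        (∀ x : U, (g (x, x)).1 = ((x, x) : U × U).1) := by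
  refine ⟨rfl, fun m => ?_⟩
  obtain ⟨U, hUo, hmU, ⟨f⟩⟩ := hatlas m
  exact ⟨U, hUo, hmU, Homeomorph.chartDifference f, fun _ _ => rfl,
    Homeomorph.chartDifference_diag f, fun _ => rfl⟩

/-- For a topological manifold `M` modeled on a topological left module `X`
over a topological ring `F`, possessing an atlas all of whose charts are homeomorphic to `X`,
the diagonal map together with the first projection forms a microbundle: `π₁ ∘ Δ = id`, and
for each `m` there are a neighborhood `U` of `m` and a homeomorphism `g : U × U ≃ₜ U × X`
with `π₁ ∘ g = π₁`, `g ∘ Δ|_U = ι₀` (the zero section), hence `π₁ ∘ ι₀ = π₁ ∘ Δ` on `U`. -/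
theorem stmt0 (F M X : Type*) [Ring F] [TopologicalSpace F] [IsTopologicalRing F]
    [TopologicalSpace M] [AddCommGroup X] [Module F X] [TopologicalSpace X]
    [IsTopologicalAddGroup X] [ContinuousSMul F X]
    (hatlas : ∀ m : M, ∃ U : Set M, IsOpen U ∧ m ∈ U ∧ Nonempty (U ≃ₜ X)) :
    ((fun m : M => ((m, m) : M × M).1) = id) ∧
    ∀ m : M, ∃ U : Set M, IsOpen U ∧ m ∈ U ∧
      ∃ g : (U × U) ≃ₜ (U × X),
        (∀ x y : U, (g (x, y)).1 = x) ∧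
        (∀ x : U, g (x, x) = (x, (0 : X))) ∧
        (∀ x : U, (g (x, x)).1 = ((x, x) : U × U).1) :=
  stmt0_general M X hatlas
end

section
/- Let F be a ring with a topology induced by a nontrivial norm such that F is zero-dimensional (dim F = 0). Then the closed unit ball B(F,0,1) = {t ∈ F : |t| ≤ 1} can be partitioned into two disjoint clopen subsets K₀ and K₁ with 0 ∈ K₀ and 1 ∈ K₁. Consequently, for any continuous f: A₁ → A, the mapping cone A ∪_f CA₁ is the disjoint union of the clopen subsets A₂ = (A ∪ (A₁ × K₁))/Ξ_f and A₃ = (A₁ × K₀)/(A₁ × {0}). -/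
/-!
The points `0` and `1` are separated by the open set `{t | |t| < 1}`, and
zero-dimensionality shrinks it to a clopen set, which cuts the unit ball into `K₀ ∋ 0` and
`K₁ ∋ 1`. In `A ⊕ (A₁ × B(F,0,1))` the clopen set `A₁ × K₀` is saturated for the cone
relation: the collapsed base `A₁ × {0}` lies inside it, and the glued end `A₁ × {1}` lies outside
it, as does `A`. Saturated clopen sets descend to clopen sets of the quotient, so its image `A₃`
and the image `A₂` of its complement split the mapping cone.
-/

/-- The closed unit ball `B(F,0,1)` of a ring with a norm-like function `v`. -/
def unitBall {F : Type*} [TopologicalSpace F] (v : F → ℝ) : Type _ := {t : F // v t ≤ 1}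

instance {F : Type*} [TopologicalSpace F] (v : F → ℝ) : TopologicalSpace (unitBall v) :=
  instTopologicalSpaceSubtype

/-- The relation generating the mapping cone `A ∪_f CA₁`. -/
def mapConeRel {F A A₁ : Type*} [TopologicalSpace F] [Zero F] [One F] (v : F → ℝ)
    (f : A₁ → A) :
    (A ⊕ (A₁ × unitBall v)) → (A ⊕ (A₁ × unitBall v)) → Prop := fun x y =>
  (∃ (a a' : A₁) (b b' : unitBall v), b.1 = 0 ∧ b'.1 = 0 ∧
      x = Sum.inr (a, b) ∧ y = Sum.inr (a', b')) ∨
  (∃ (a : A₁) (b : unitBall v), b.1 = 1 ∧ x = Sum.inr (a, b) ∧ y = Sum.inl (f a))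

/-- The mapping cone `A ∪_f CA₁` over the ring `F`. -/
def MapCone {F A A₁ : Type*} [TopologicalSpace F] [Zero F] [One F] (v : F → ℝ)
    (f : A₁ → A) : Type _ :=
  Quot (mapConeRel v f)

instance {F A A₁ : Type*} [TopologicalSpace F] [Zero F] [One F] [TopologicalSpace A]
    [TopologicalSpace A₁] (v : F → ℝ) (f : A₁ → A) : TopologicalSpace (MapCone v f) :=
  instTopologicalSpaceQuot

namespace Quot

variable {X : Type*} {r : X → X → Prop} {S : Set X}

theorem preimage_mk_image_mk (hS : ∀ x y, r x y → (x ∈ S ↔ y ∈ S)) :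
    Quot.mk r ⁻¹' (Quot.mk r '' S) = S := by
  refine (Set.subset_preimage_image _ _).antisymm' ?_
  rintro x ⟨y, hy, hyx⟩
  exact cast (congrArg (Quot.lift (· ∈ S) fun a b h => propext (hS a b h)) hyx) hy

theorem image_mk_compl (hS : ∀ x y, r x y → (x ∈ S ↔ y ∈ S)) :
    Quot.mk r '' Sᶜ = (Quot.mk r '' S)ᶜ := by
  conv_lhs => rw [← preimage_mk_image_mk hS]
  rw [Set.image_compl_preimage, Quot.mk_surjective.range_eq, ← Set.compl_eq_univ_sdiff]

theorem isClopen_image_mk [TopologicalSpace X] (hSc : IsClopen S)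
    (hS : ∀ x y, r x y → (x ∈ S ↔ y ∈ S)) : IsClopen (Quot.mk r '' S) := by
  rwa [← isQuotientMap_quot_mk.isClopen_preimage, preimage_mk_image_mk hS]

end Quot

theorem IsClopen.image_inr {X Y : Type*} [TopologicalSpace X] [TopologicalSpace Y]
    {T : Set Y} (hT : IsClopen T) : IsClopen (Sum.inr '' T : Set (X ⊕ Y)) :=
  ⟨Topology.IsClosedEmbedding.inr.isClosedMap _ hT.1,
    Topology.IsOpenEmbedding.inr.isOpenMap _ hT.2⟩

theorem Set.range_inl_union_image_inr_compl {X Y : Type*} (T : Set Y) :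
    Set.range (Sum.inl : X → X ⊕ Y) ∪ Sum.inr '' Tᶜ = (Sum.inr '' T)ᶜ := by
  simpa using Set.inl_compl_union_inr_compl (s := (∅ : Set X)) (t := T)

section MapCone

variable {F A A₁ : Type*} [TopologicalSpace F] [Zero F] [One F] {v : F → ℝ}

theorem exists_isClopen_unitBall_zero_mem_one_notMem (hv : Continuous v) (hv0 : v 0 < 1)
    (hv1 : 1 ≤ v 1)
    (hzero : ∀ U : Set F, IsOpen U → ∀ x ∈ U, ∃ C : Set F, IsClopen C ∧ x ∈ C ∧ C ⊆ U) :
    ∃ K : Set (unitBall v), IsClopen K ∧ (∀ b : unitBall v, b.1 = 0 → b ∈ K) ∧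
      ∀ b : unitBall v, b.1 = 1 → b ∉ K := by
  obtain ⟨C, hC, h0C, hC1⟩ := hzero {t | v t < 1} (isOpen_lt hv continuous_const) 0 hv0
  exact ⟨Subtype.val ⁻¹' C, hC.preimage continuous_subtype_val,
    fun b hb => show b.1 ∈ C from hb ▸ h0C, fun b hb hbC => (hC1 hbC).not_ge (hb ▸ hv1)⟩

theorem mapConeRel_mem_image_inr_iff {f : A₁ → A} {K : Set (unitBall v)}
    (hK0 : ∀ b : unitBall v, b.1 = 0 → b ∈ K) (hK1 : ∀ b : unitBall v, b.1 = 1 → b ∉ K)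
    (x y : A ⊕ (A₁ × unitBall v)) (hxy : mapConeRel v f x y) :
    x ∈ Sum.inr '' {q : A₁ × unitBall v | q.2 ∈ K} ↔
      y ∈ Sum.inr '' {q : A₁ × unitBall v | q.2 ∈ K} := by
  rcases hxy with ⟨a, a', b, b', hb, hb', rfl, rfl⟩ | ⟨a, b, hb, rfl, rfl⟩
  · simp [hK0 b hb, hK0 b' hb']
  · simp [hK1 b hb]

end MapCone

/-- If `F` is a zero-dimensional ring with topology induced by a nontrivial
norm `v`, then the closed unit ball `B(F,0,1)` is partitioned into disjoint clopen sets
`K₀ ∋ 0` and `K₁ ∋ 1`; consequently for any continuous `f : A₁ → A` the mapping cone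
`A ∪_f CA₁` is the disjoint union of the clopen subsets
`A₂ = (A ∪ (A₁ × K₁))/Ξ_f` and `A₃ = (A₁ × K₀)/(A₁ × {0})`. -/
theorem stmt5 {F A A₁ : Type*} [Ring F] [tF : TopologicalSpace F]
    [TopologicalSpace A] [TopologicalSpace A₁]
    (v : F → ℝ)
    (htop : tF = TopologicalSpace.induced v inferInstance)
    (hv0 : v 0 = 0) (hv1 : v 1 = 1)
    (hzero : ∀ U : Set F, IsOpen U → ∀ x ∈ U, ∃ C : Set F, IsClopen C ∧ x ∈ C ∧ C ⊆ U)
    (f : A₁ → A) :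
    ∃ K₀ K₁ : Set (unitBall v),
      IsClopen K₀ ∧ IsClopen K₁ ∧ K₀ ∩ K₁ = ∅ ∧ K₀ ∪ K₁ = Set.univ ∧
      (⟨(0 : F), by rw [hv0]; exact zero_le_one⟩ : unitBall v) ∈ K₀ ∧
      (⟨(1 : F), by rw [hv1]⟩ : unitBall v) ∈ K₁ ∧
      (let A₂ : Set (MapCone v f) := Quot.mk (mapConeRel v f) ''
          (Set.range Sum.inl ∪ Sum.inr '' {q : A₁ × unitBall v | q.2 ∈ K₁});
       let A₃ : Set (MapCone v f) := Quot.mk (mapConeRel v f) ''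
          (Sum.inr '' {q : A₁ × unitBall v | q.2 ∈ K₀});
       IsClopen A₂ ∧ IsClopen A₃ ∧ A₂ ∩ A₃ = ∅ ∧ A₂ ∪ A₃ = Set.univ) := by
  obtain ⟨K, hK, hK0, hK1⟩ := exists_isClopen_unitBall_zero_mem_one_notMem
    (continuous_iff_le_induced.2 htop.le) (hv0 ▸ zero_lt_one) hv1.ge hzero
  refine ⟨K, Kᶜ, hK, hK.compl, Set.inter_compl_self K, Set.union_compl_self K,
    hK0 _ rfl, hK1 _ rfl, ?_⟩
  intro A₂ A₃
  have hsat := mapConeRel_mem_image_inr_iff (f := f) hK0 hK1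
  have hA₂ : A₂ = A₃ᶜ := by
    rw [show A₃ᶜ = _ from (Quot.image_mk_compl hsat).symm,
      ← Set.range_inl_union_image_inr_compl]
    rfl
  have hA₃ : IsClopen A₃ := Quot.isClopen_image_mk (hK.preimage continuous_snd).image_inr hsat
  rw [hA₂]
  exact ⟨hA₃.compl, hA₃, Set.compl_inter_self A₃, Set.compl_union_self A₃⟩
end
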